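/- Let a be real with a > k_1 + (m-1)/2, m a positive integer, and κ = (k_1,...,k_m) a partition with |κ| = k. Then π^{m(m-1)/4} ∏_{i=1}^m Γ(a - k_{m+1-i} - (i-1)/2) = (-1)^k Γ_m(a) / (-a + (m+1)/2)_κ, where Γ_m(a) = π^{m(m-1)/4} ∏_{i=1}^m Γ(a - (i-1)/2) and (b)_κ = ∏_{i=1}^m (b - (i-1)/2)_{k_i}. -/
import Mathlib

lemma asc_eval_prod (x : ℝ) (n : ℕ) :
    (ascPochhammer ℝ n).eval x = ∏ i ∈ Finset.range n, (x + i) := by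
  induction n with
  | zero => simp
  | succ n ih => rw [ascPochhammer_succ_eval, ih, Finset.prod_range_succ]

lemma gamma_add_nat (x : ℝ) (hx : 0 < x) (n : ℕ) :
    Real.Gamma (x + n) = Real.Gamma x * (ascPochhammer ℝ n).eval x := by
  induction n with
  | zero => simp
  | succ n ih =>
      have h1 : x + (n + 1 : ℕ) = (x + n) + 1 := by push_cast; ring
      rw [h1, Real.Gamma_add_one (by positivity), ih, ascPochhammer_succ_eval]
      ring

lemma asc_reflect (c : ℝ) (n : ℕ) :
    (ascPochhammer ℝ n).eval (c - n) = (-1) ^ n * (ascPochhammer ℝ n).eval (1 - c) := by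
  rw [asc_eval_prod, asc_eval_prod, ← Finset.prod_range_reflect (fun i => (c - n + i))]
  rw [Finset.pow_eq_prod_const, ← Finset.prod_mul_distrib]
  refine Finset.prod_congr rfl fun i hi => ?_
  have hi' : i < n := Finset.mem_range.mp hi
  have : ((n - 1 - i : ℕ) : ℝ) = n - 1 - i := by
    have h1 : i ≤ n - 1 := Nat.le_sub_one_of_lt hi'
    have h2 : 1 ≤ n := by omega
    rw [Nat.cast_sub h1, Nat.cast_sub h2]
    norm_num
  rw [this]; ring

lemma key_factor (c : ℝ) (n : ℕ) (h : 0 < c - n) :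
    Real.Gamma (c - n) * (ascPochhammer ℝ n).eval (1 - c) = (-1) ^ n * Real.Gamma c := by
  have := gamma_add_nat (c - n) h n
  rw [show c - n + n = c by ring] at this
  rw [asc_reflect] at this
  have hsq : ((-1 : ℝ) ^ n) * ((-1 : ℝ) ^ n) = 1 := by
    rw [← pow_add, ← two_mul, pow_mul]; norm_num
  calc Real.Gamma (c - n) * (ascPochhammer ℝ n).eval (1 - c)
      = (-1)^n * ((-1)^n * (Real.Gamma (c - n) * (ascPochhammer ℝ n).eval (1 - c))) := by
        rw [← mul_assoc, hsq, one_mul]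
    _ = (-1)^n * Real.Gamma c := by rw [this]; ring

noncomputable def multivariateGamma (m : ℕ) (a : ℝ) : ℝ :=
  Real.pi ^ (((m * (m - 1) : ℕ) : ℝ) / 4) *
    ∏ i ∈ Finset.Icc 1 m, Real.Gamma (a - (i - 1) / 2)

noncomputable def genPochhammer (b : ℝ) (k : ℕ → ℕ) (m : ℕ) : ℝ :=
  ∏ i ∈ Finset.Icc 1 m, (ascPochhammer ℝ (k i)).eval (b - (i - 1) / 2)

theorem key_coefficient_identity (a : ℝ) (m : ℕ) (hm : 0 < m) (k : ℕ → ℕ)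
    (hmono : ∀ i j, i ≤ j → k j ≤ k i) (ha : a > k 1 + (m - 1) / 2) :
    Real.pi ^ (((m * (m - 1) : ℕ) : ℝ) / 4) *
        ∏ i ∈ Finset.Icc 1 m, Real.Gamma (a - k (m + 1 - i) - (i - 1) / 2) =
      (-1) ^ (∑ i ∈ Finset.Icc 1 m, k i) * multivariateGamma m a /
        genPochhammer (-a + (m + 1) / 2) k m := by
  have hinv : ∀ i ∈ Finset.Icc 1 m, m + 1 - (m + 1 - i) = i := by
    intro i hi; obtain ⟨h1, h2⟩ := Finset.mem_Icc.mp hi; omega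
  have hmem : ∀ i ∈ Finset.Icc 1 m, m + 1 - i ∈ Finset.Icc 1 m := by
    intro i hi; obtain ⟨h1, h2⟩ := Finset.mem_Icc.mp hi
    exact Finset.mem_Icc.mpr ⟨by omega, by omega⟩
  have hcast : ∀ i ∈ Finset.Icc 1 m, ((m + 1 - i : ℕ) : ℝ) = m + 1 - i := by
    intro i hi; obtain ⟨h1, h2⟩ := Finset.mem_Icc.mp hi
    rw [Nat.cast_sub (by omega)]; push_cast; ring
  have hpos : ∀ i ∈ Finset.Icc 1 m, 0 < (a - ((i : ℝ) - 1) / 2) - (k (m + 1 - i) : ℝ) := by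
    intro i hi; obtain ⟨h1, h2⟩ := Finset.mem_Icc.mp hi
    have hk : (k (m + 1 - i) : ℝ) ≤ (k 1 : ℝ) := by
      exact_mod_cast hmono 1 (m + 1 - i) (by omega)
    have him : (i : ℝ) ≤ m := by exact_mod_cast h2
    linarith
  have hgen : genPochhammer (-a + (m + 1) / 2) k m =
      ∏ i ∈ Finset.Icc 1 m,
        (ascPochhammer ℝ (k (m + 1 - i))).eval (1 - (a - ((i : ℝ) - 1) / 2)) := by
    rw [genPochhammer]
    refine Finset.prod_bij' (fun i _ => m + 1 - i) (fun i _ => m + 1 - i)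
      hmem hmem hinv hinv ?_
    intro i hi
    have h1 := hcast i hi
    have h2 := hinv i hi
    rw [h2, h1]
    ring_nf
  have hsum : (∑ i ∈ Finset.Icc 1 m, k i) = ∑ i ∈ Finset.Icc 1 m, k (m + 1 - i) :=
    Finset.sum_bij' (fun i _ => m + 1 - i) (fun i _ => m + 1 - i)
      hmem hmem hinv hinv (fun i hi => by rw [hinv i hi])
  have hglhs : ∀ i ∈ Finset.Icc 1 m,
      a - (k (m + 1 - i) : ℝ) - ((i : ℝ) - 1) / 2
        = (a - ((i : ℝ) - 1) / 2) - (k (m + 1 - i) : ℕ) := by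
    intro i _; push_cast; ring
  have hprod : (∏ i ∈ Finset.Icc 1 m, Real.Gamma (a - (k (m + 1 - i) : ℝ) - ((i : ℝ) - 1) / 2)) *
      (∏ i ∈ Finset.Icc 1 m, (ascPochhammer ℝ (k (m + 1 - i))).eval (1 - (a - ((i : ℝ) - 1) / 2)))
      = (-1) ^ (∑ i ∈ Finset.Icc 1 m, k (m + 1 - i)) *
        ∏ i ∈ Finset.Icc 1 m, Real.Gamma (a - ((i : ℝ) - 1) / 2) := by
    rw [← Finset.prod_mul_distrib, ← Finset.prod_pow_eq_pow_sum, ← Finset.prod_mul_distrib]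
    refine Finset.prod_congr rfl fun i hi => ?_
    rw [hglhs i hi]
    exact key_factor _ _ (hpos i hi)
  have hne : genPochhammer (-a + (m + 1) / 2) k m ≠ 0 := by
    rw [hgen]
    refine Finset.prod_ne_zero_iff.mpr fun i hi => ?_
    have := asc_reflect (a - ((i : ℝ) - 1) / 2) (k (m + 1 - i))
    have hp := ascPochhammer_pos (k (m + 1 - i)) _ (hpos i hi)
    intro h0
    rw [h0, mul_zero] at this
    exact absurd this (ne_of_gt hp)
  rw [eq_div_iff hne, hgen, multivariateGamma, hsum, mul_assoc, hprod]
  ring
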